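/- A Boolean frame (complete Boolean algebra viewed as a frame) is two-valued (has exactly the elements ⊥ and ⊤, with ⊥ ≠ ⊤) if and only if it has no proper nontrivial nucleus: every nucleus on it is either the identity or the constant-⊤ nucleus. Equivalently, two-valued Boolean frames are atoms in the lattice of sublocales of any frame containing them as a sublocale quotient. -/

import Mathlib

/-! In a two-valued frame a nucleus `k` is determined by `k ⊥`: it is the identity if
`k ⊥ = ⊥` and constantly `⊤` if `k ⊥ = ⊤`. Conversely, every element `a` gives the closed
nucleus `a ⊔ ·`, which is the identity exactly when `a = ⊥` and constantly `⊤` exactly when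
`a = ⊤`. -/

theorem monotone_of_map_inf {α β : Type*} [SemilatticeInf α] [SemilatticeInf β] {k : α → β}
    (hk : ∀ x y, k (x ⊓ y) = k x ⊓ k y) : Monotone k := fun x y hxy => by
  rw [← inf_eq_left.mpr hxy, hk]
  exact inf_le_right

theorem eq_self_or_eq_top_of_forall_eq_bot_or_eq_top {α : Type*} [PartialOrder α]
    [BoundedOrder α] (h2 : ∀ x : α, x = ⊥ ∨ x = ⊤) {k : α → α} (hmono : Monotone k)
    (hinfl : ∀ x, x ≤ k x) : (∀ x, k x = x) ∨ (∀ x, k x = ⊤) := by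
  rcases h2 (k ⊥) with hbot | hbot
  · left
    intro x
    rcases h2 x with rfl | rfl
    · exact hbot
    · exact top_le_iff.mp (hinfl ⊤)
  · exact .inr fun x => top_le_iff.mp (hbot ▸ hmono bot_le)

/-- A Boolean frame (complete Boolean algebra viewed as a frame) is two-valued (its only
elements are `⊥` and `⊤`, which are distinct) if and only if it is nondegenerate and
every nucleus on it is either the identity or the constant-`⊤` nucleus (the latter
having the degenerate one-element frame of fixed points). -/
theorem stmt9 {L : Type*} [CompleteBooleanAlgebra L] :
    ((∀ x : L, x = ⊥ ∨ x = ⊤) ∧ (⊥ : L) ≠ ⊤) ↔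
    ((⊥ : L) ≠ ⊤ ∧
      ∀ k : L → L,
        (∀ x : L, x ≤ k x) → (∀ x : L, k (k x) = k x) →
        (∀ x y : L, k (x ⊓ y) = k x ⊓ k y) →
        (∀ x : L, k x = x) ∨ (∀ x : L, k x = ⊤)) := by
  constructor
  · rintro ⟨h2, hne⟩
    exact ⟨hne, fun k hinfl _ hinf =>
      eq_self_or_eq_top_of_forall_eq_bot_or_eq_top h2 (monotone_of_map_inf hinf) hinfl⟩
  · rintro ⟨hne, hk⟩
    refine ⟨fun a => ?_, hne⟩
    have hclosed := hk (a ⊔ ·) (fun _ => le_sup_right) (sup_left_idem a) (sup_inf_left a)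
    rcases hclosed with hid | htop
    · exact .inl (by simpa using hid ⊥)
    · exact .inr (by simpa using htop ⊥)
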